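/- Let p, q ∈ ℝ³ \ {0} and let ω ∈ S² be a unit vector, with post-collision momenta p'⁰, q'⁰, p', q' defined by the stated parametrization. Then the post-collision momenta are null and four-momentum is conserved: |p'| = p'⁰, |q'| = q'⁰, p'⁰ + q'⁰ = |p| + |q|, and (as vectors) p' + q' = p + q. -/

import Mathlib

/-!
With `s = |p| + |q|` and `P = p + q`, the relative momentum satisfies `ρ² + |P|² = s²`, i.e. `ρ`
is the invariant mass of the total four-momentum `(s, P)`. Expanding `|p'|²` and using this
identity gives `|p'| = (s + P·ω) / 2 = p'⁰`. Replacing `ω` by `-ω` turns `p'` into `q'`, and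
the conservation laws are linear identities.
-/

noncomputable section

open MeasureTheory Real Metric
open scoped RealInnerProductSpace

/-- Momentum space `ℝ³`. -/
abbrev R3 : Type := EuclideanSpace ℝ (Fin 3)

/-- The relative momentum `ρ(p,q) = √(2(|p||q| − p·q))`. -/
def relMom (p q : R3) : ℝ := Real.sqrt (2 * (‖p‖ * ‖q‖ - ⟪p, q⟫))

/-- Post-collision momentum `p'`. -/
def pPost (p q ω : R3) : R3 :=
  (1 / 2 : ℝ) • (p + q) + (relMom p q / 2) • ω
    + (⟪p + q, ω⟫ / 2 / (‖p‖ + ‖q‖ + relMom p q)) • (p + q)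

/-- Post-collision momentum `q'`. -/
def qPost (p q ω : R3) : R3 :=
  (1 / 2 : ℝ) • (p + q) - (relMom p q / 2) • ω
    - (⟪p + q, ω⟫ / 2 / (‖p‖ + ‖q‖ + relMom p q)) • (p + q)

/-- Post-collision energy `p'⁰`. -/
def p0Post (p q ω : R3) : ℝ := (‖p‖ + ‖q‖) / 2 + ⟪p + q, ω⟫ / 2

/-- Post-collision energy `q'⁰`. -/
def q0Post (p q ω : R3) : ℝ := (‖p‖ + ‖q‖) / 2 - ⟪p + q, ω⟫ / 2

/-- The surface measure `dω` on the unit sphere `S² ⊂ ℝ³` (total mass `4π`). -/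
def sphMeasure : Measure (sphere (0 : R3) 1) := (volume : Measure R3).toSphere

/-- The (modified, for `ε > 0`) massless Boltzmann collision operator with scattering
cross-section `σ = C₁ h^{-b}`. -/
def Qcoll (C₁ b ε : ℝ) (f : R3 → ℝ) (p : R3) : ℝ :=
  C₁ * ∫ q : R3, ∫ ω : sphere (0 : R3) 1,
      (if ε ≤ relMom p q then relMom p q ^ (2 - b) / (‖p‖ * ‖q‖) else 0)
        * (f (pPost p q ω) * f (qPost p q ω) - f p * f q) ∂sphMeasure

theorem norm_smul_add_smul_sq_real {E : Type*} [NormedAddCommGroup E] [InnerProductSpace ℝ E]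
    (α β : ℝ) (u w : E) :
    ‖α • u + β • w‖ ^ 2 = α ^ 2 * ‖u‖ ^ 2 + 2 * (α * β) * ⟪u, w⟫ + β ^ 2 * ‖w‖ ^ 2 := by
  rw [norm_add_sq_real, norm_smul, norm_smul, real_inner_smul_left, real_inner_smul_right,
    mul_pow, mul_pow, Real.norm_eq_abs, Real.norm_eq_abs, sq_abs, sq_abs]
  ring

/-- `(s, P)` is a four-vector of Minkowski mass `ρ`; the left side is the spatial part of the
boost, from its rest frame, of the null vector `(ρ / 2) (1, ω)`. -/
theorem norm_smul_add_smul_eq_of_sq_add_sq {E : Type*} [NormedAddCommGroup E]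
    [InnerProductSpace ℝ E] {P ω : E} {s ρ : ℝ} (hs : 0 ≤ s) (hρ : 0 ≤ ρ)
    (hmass : ρ ^ 2 + ‖P‖ ^ 2 = s ^ 2) (hω : ‖ω‖ = 1) :
    ‖(1 / 2 + ⟪P, ω⟫ / 2 / (s + ρ)) • P + (ρ / 2) • ω‖ = (s + ⟪P, ω⟫) / 2 := by
  have hPs : ‖P‖ ≤ s := by nlinarith [norm_nonneg P]
  have hinner : |⟪P, ω⟫| ≤ s := by
    simpa [hω] using (abs_real_inner_le_norm P ω).trans (by rwa [hω, mul_one])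
  rcases (add_nonneg hs hρ).eq_or_lt with hsρ | hsρ
  · -- `s = ρ = 0` forces `P = 0`, so the junk value of `_ / 0` does not matter
    obtain rfl : P = 0 := by rw [← norm_eq_zero]; nlinarith [norm_nonneg P]
    obtain rfl : ρ = 0 := by linarith
    simp only [inner_zero_left, smul_zero, zero_div, zero_smul, norm_zero, add_zero]
    linarith
  have hrhs : 0 ≤ (s + ⟪P, ω⟫) / 2 := by linarith [neg_abs_le ⟪P, ω⟫]
  rw [← sq_eq_sq₀ (norm_nonneg _) hrhs, norm_smul_add_smul_sq_real, hω,
    show ‖P‖ ^ 2 = s ^ 2 - ρ ^ 2 by linarith]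
  field_simp
  ring

theorem pPost_eq (p q ω : R3) :
    pPost p q ω = (1 / 2 + ⟪p + q, ω⟫ / 2 / (‖p‖ + ‖q‖ + relMom p q)) • (p + q)
      + (relMom p q / 2) • ω := by
  rw [pPost]; module

theorem qPost_eq_pPost_neg (p q ω : R3) : qPost p q ω = pPost p q (-ω) := by
  rw [qPost, pPost, inner_neg_right]; module

theorem q0Post_eq_p0Post_neg (p q ω : R3) : q0Post p q ω = p0Post p q (-ω) := by
  rw [q0Post, p0Post, inner_neg_right]; ring

theorem relMom_sq_add_norm_add_sq (p q : R3) :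
    relMom p q ^ 2 + ‖p + q‖ ^ 2 = (‖p‖ + ‖q‖) ^ 2 := by
  rw [relMom, Real.sq_sqrt (by linarith [real_inner_le_norm p q]), norm_add_sq_real]
  ring

theorem norm_pPost (p q : R3) {ω : R3} (hω : ‖ω‖ = 1) : ‖pPost p q ω‖ = p0Post p q ω := by
  rw [pPost_eq, norm_smul_add_smul_eq_of_sq_add_sq (ρ := relMom p q) (by positivity)
    (Real.sqrt_nonneg _) (relMom_sq_add_norm_add_sq p q) hω, p0Post]
  ring

theorem post_collision_null_and_conserved_general (p q ω : R3)
    (hω : ‖ω‖ = 1) :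
    ‖pPost p q ω‖ = p0Post p q ω ∧ ‖qPost p q ω‖ = q0Post p q ω ∧
    p0Post p q ω + q0Post p q ω = ‖p‖ + ‖q‖ ∧
    pPost p q ω + qPost p q ω = p + q := by
  refine ⟨norm_pPost p q hω, ?_, by rw [p0Post, q0Post]; ring, by rw [pPost, qPost]; module⟩
  rw [qPost_eq_pPost_neg, q0Post_eq_p0Post_neg]
  exact norm_pPost p q (by rwa [norm_neg])

/-- The post-collision momenta are null (`|p'| = p'⁰`, `|q'| = q'⁰`) and four-momentum is
conserved: `p'⁰ + q'⁰ = |p| + |q|` and `p' + q' = p + q`. -/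
theorem post_collision_null_and_conserved (p q ω : R3) (hp : p ≠ 0) (hq : q ≠ 0)
    (hω : ‖ω‖ = 1) :
    ‖pPost p q ω‖ = p0Post p q ω ∧ ‖qPost p q ω‖ = q0Post p q ω ∧
    p0Post p q ω + q0Post p q ω = ‖p‖ + ‖q‖ ∧
    pPost p q ω + qPost p q ω = p + q :=
  post_collision_null_and_conserved_general p q ω hω
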